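/- arXiv:1305.0220 — 5 statements merged into one kernel-verified Lean document; each statement's English description precedes it below -/
import Mathlib

section
/- Suppose X_i ~ N(0,1) for i in S_0 and X_i ~ N(μ,1) for i in S_1, all independent, with |S_0|, |S_1| → ∞. If μ ≥ sqrt(2(1+ε) log |S_0|) - sqrt(2 log |S_1|) for some fixed ε > 0, then P(max_{i∈S_1} X_i ≤ max_{i∈S_0} X_i) → 0; that is, the signal subset exists with probability tending to 1. -/
/-!
Split at the threshold `t = √(2 (1 + ε/2) log n₀)`. If the largest signal does not beat the
largest noise, either every signal lies below `t` or some noise exceeds `t`. By the Chernoff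
bound and a union bound the second event has probability at most
`n₀ e^{-t²/2} = n₀^{-ε/2} → 0`. By independence the first has probability
`(1 - p)^{n₁} ≤ e^{-n₁ p}`, where `p` is the Gaussian tail at
`t - μ ≤ √(2 log n₁) - (√(1+ε) - √(1+ε/2)) √(2 log n₀)`; the elementary bound
`p ≥ e^{-(s+1)²/2} / √(2π)` for `s = max (t - μ) 0` then gives `n₁ p → ∞`.
-/

open MeasureTheory ProbabilityTheory Filter Set Real Topology

lemma gaussianReal_real_Ici_le_exp {t : ℝ} (ht : 0 ≤ t) :
    (gaussianReal 0 1).real (Ici t) ≤ exp (-(t ^ 2 / 2)) :=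
  calc (gaussianReal 0 1).real (Ici t) ≤ exp (-t * t) * mgf id (gaussianReal 0 1) t :=
        measure_ge_le_exp_mul_mgf t ht (integrable_exp_mul_gaussianReal t)
    _ = exp (-(t ^ 2 / 2)) := by
        rw [mgf_id_gaussianReal, ← exp_add]
        push_cast
        ring_nf

lemma gaussianReal_real_Ioi_ge_of_nonneg {s : ℝ} (hs : 0 ≤ s) :
    exp (-((s + 1) ^ 2 / 2)) / √(2 * π) ≤ (gaussianReal 0 1).real (Ioi s) := by
  have hpdf : ∀ x ∈ Ioc s (s + 1),
      ENNReal.ofReal (exp (-((s + 1) ^ 2 / 2)) / √(2 * π)) ≤ gaussianPDF 0 1 x := by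
    intro x ⟨hsx, hxs⟩
    simp only [gaussianPDF, gaussianPDFReal, NNReal.coe_one, mul_one, sub_zero, inv_mul_eq_div]
    gcongr
    nlinarith
  refine (ENNReal.ofReal_le_iff_le_toReal (measure_ne_top _ _)).1 ?_
  calc ENNReal.ofReal (exp (-((s + 1) ^ 2 / 2)) / √(2 * π))
      = ∫⁻ _ in Ioc s (s + 1), ENNReal.ofReal (exp (-((s + 1) ^ 2 / 2)) / √(2 * π)) := by
        simp
    _ ≤ ∫⁻ x in Ioc s (s + 1), gaussianPDF 0 1 x := setLIntegral_mono (by fun_prop) hpdf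
    _ ≤ ∫⁻ x in Ioi s, gaussianPDF 0 1 x := lintegral_mono_set Ioc_subset_Ioi_self
    _ = gaussianReal 0 1 (Ioi s) := (gaussianReal_apply 0 one_ne_zero _).symm

lemma gaussianReal_real_Ioi_ge (μ t : ℝ) :
    exp (-((max (t - μ) 0 + 1) ^ 2 / 2)) / √(2 * π) ≤ (gaussianReal μ 1).real (Ioi t) := by
  rw [← zero_add μ, ← gaussianReal_map_add_const,
    map_measureReal_apply (by fun_prop) measurableSet_Ioi, preimage_add_const_Ioi, zero_add]
  exact (gaussianReal_real_Ioi_ge_of_nonneg (le_max_right _ _)).trans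
    (measureReal_mono (Ioi_subset_Ioi (le_max_left _ _)))

lemma measureReal_pow_le_exp_neg_mul_compl {α : Type*} [MeasurableSpace α] (ν : Measure α)
    [IsProbabilityMeasure ν] {s : Set α} (hs : MeasurableSet s) (n : ℕ) :
    ν.real s ^ n ≤ exp (-(n * ν.real sᶜ)) :=
  calc ν.real s ^ n = (1 - ν.real sᶜ) ^ n := by rw [probReal_compl_eq_one_sub hs, sub_sub_cancel]
    _ ≤ exp (-ν.real sᶜ) ^ n := by
        gcongr
        · simp
        · exact one_sub_le_exp_neg _
    _ = exp (-(n * ν.real sᶜ)) := by rw [← exp_nat_mul, mul_neg]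

lemma forall_le_or_exists_lt_of_iSup_le_iSup {ι ι' : Type*} [Finite ι] [Nonempty ι']
    {y : ι → ℝ} {z : ι' → ℝ} (h : ⨆ j, y j ≤ ⨆ i, z i) (t : ℝ) :
    (∀ j, y j ≤ t) ∨ ∃ i, t < z i := by
  refine or_iff_not_imp_right.2 fun hz j => ?_
  push Not at hz
  exact (le_ciSup (Finite.bddAbove_range y) j).trans (h.trans (ciSup_le hz))

section IdenticallyDistributed

variable {Ω ι : Type*} [MeasurableSpace Ω] {P : Measure Ω} [Fintype ι]
  {Y : ι → Ω → ℝ} {ν : Measure ℝ} {s : Set ℝ}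

lemma ProbabilityTheory.iIndepFun.measureReal_iInter_preimage_eq_pow (hindep : iIndepFun Y P)
    (hmeas : ∀ j, Measurable (Y j)) (hlaw : ∀ j, P.map (Y j) = ν) (hs : MeasurableSet s) :
    P.real (⋂ j, Y j ⁻¹' s) = ν.real s ^ Fintype.card ι := by
  have hprod := hindep.measure_inter_preimage_eq_mul Finset.univ (sets := fun _ => s)
    fun _ _ => hs
  simp only [Finset.mem_univ, iInter_true] at hprod
  have hlaw' : ∀ j, P (Y j ⁻¹' s) = ν s := fun j => by
    rw [← hlaw j, Measure.map_apply (hmeas j) hs]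
  simp [measureReal_def, hprod, hlaw']

lemma measureReal_iUnion_preimage_le_card_mul (hmeas : ∀ i, Measurable (Y i))
    (hlaw : ∀ i, P.map (Y i) = ν) (hs : MeasurableSet s) :
    P.real (⋃ i, Y i ⁻¹' s) ≤ Fintype.card ι * ν.real s :=
  (measureReal_iUnion_fintype_le _).trans_eq <| by
    simp only [← map_measureReal_apply (hmeas _) hs, hlaw, Finset.sum_const, Finset.card_univ,
      nsmul_eq_mul]

end IdenticallyDistributed

section TwoGroups

variable {Ω ι₀ ι₁ : Type*} [MeasurableSpace Ω] (P : Measure Ω) [IsProbabilityMeasure P]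
  [Fintype ι₀] [Nonempty ι₀] [Fintype ι₁] (X : ι₀ ⊕ ι₁ → Ω → ℝ)

lemma measureReal_iSup_inr_le_iSup_inl_le (hmeas : ∀ i, Measurable (X i))
    (hindep : iIndepFun X P) {ν₀ ν₁ : Measure ℝ} (hlaw₀ : ∀ i, P.map (X (.inl i)) = ν₀)
    (hlaw₁ : ∀ j, P.map (X (.inr j)) = ν₁) (t : ℝ) :
    P.real {ω | ⨆ j, X (.inr j) ω ≤ ⨆ i, X (.inl i) ω}
      ≤ ν₁.real (Iic t) ^ Fintype.card ι₁ + Fintype.card ι₀ * ν₀.real (Ici t) := by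
  have hsub : {ω | ⨆ j, X (.inr j) ω ≤ ⨆ i, X (.inl i) ω}
      ⊆ (⋂ j, X (.inr j) ⁻¹' Iic t) ∪ ⋃ i, X (.inl i) ⁻¹' Ici t := fun ω hω => by
    rcases forall_le_or_exists_lt_of_iSup_le_iSup hω t with hsignal | ⟨i, hi⟩
    · exact .inl (mem_iInter.2 hsignal)
    · exact .inr (mem_iUnion.2 ⟨i, hi.le⟩)
  have hindep₁ : iIndepFun (fun j => X (.inr j)) P := hindep.precomp Sum.inr_injective
  calc P.real _ ≤ P.real (⋂ j, X (.inr j) ⁻¹' Iic t) + P.real (⋃ i, X (.inl i) ⁻¹' Ici t) :=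
        (measureReal_mono hsub).trans (measureReal_union_le _ _)
    _ ≤ _ := by
        gcongr
        · exact (hindep₁.measureReal_iInter_preimage_eq_pow (fun j => hmeas _) hlaw₁
            measurableSet_Iic).le
        · exact measureReal_iUnion_preimage_le_card_mul (fun i => hmeas _) hlaw₀
            measurableSet_Ici

lemma measureReal_iSup_inr_le_iSup_inl_le_of_gaussian (hmeas : ∀ i, Measurable (X i))
    (hindep : iIndepFun X P) (μ : ℝ) (hnoise : ∀ i, P.map (X (.inl i)) = gaussianReal 0 1)
    (hsignal : ∀ j, P.map (X (.inr j)) = gaussianReal μ 1) {t : ℝ} (ht : 0 ≤ t) :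
    P.real {ω | ⨆ j, X (.inr j) ω ≤ ⨆ i, X (.inl i) ω}
      ≤ exp (-(Fintype.card ι₁ * (exp (-((max (t - μ) 0 + 1) ^ 2 / 2)) / √(2 * π))))
        + Fintype.card ι₀ * exp (-(t ^ 2 / 2)) := by
  refine (measureReal_iSup_inr_le_iSup_inl_le P X hmeas hindep hnoise hsignal t).trans ?_
  gcongr
  · refine (measureReal_pow_le_exp_neg_mul_compl _ measurableSet_Iic _).trans ?_
    rw [compl_Iic]
    gcongr
    exact gaussianReal_real_Ioi_ge μ t
  · exact gaussianReal_real_Ici_le_exp ht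

end TwoGroups

section Asymptotics

variable {α : Type*} {l : Filter α}

lemma tendsto_sqrt_two_mul_log_atTop {n : α → ℕ} (hn : Tendsto n l atTop) :
    Tendsto (fun k => √(2 * log (n k))) l atTop :=
  tendsto_sqrt_atTop.comp <|
    (tendsto_log_atTop.comp (tendsto_natCast_atTop_atTop.comp hn)).const_mul_atTop two_pos

lemma exp_sqrt_two_mul_log_sq_div_two {n : ℕ} (hn : n ≠ 0) :
    exp (√(2 * log n) ^ 2 / 2) = n := by
  rw [sq_sqrt (by positivity), mul_div_cancel_left₀ _ two_ne_zero, exp_log (by positivity)]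

lemma tendsto_sq_sub_sq_max_add_one_atTop {L c x : α → ℝ} (hL : Tendsto L l atTop)
    (hc : Tendsto c l atTop) (hx : ∀ k, x k ≤ L k - c k) :
    Tendsto (fun k => L k ^ 2 - (max (x k) 0 + 1) ^ 2) l atTop := by
  have hmin : Tendsto (fun k => min (L k ^ 2 - 1) (c k - 1)) l atTop :=
    tendsto_inf_atTop l
      (tendsto_atTop_add_const_right _ _ ((tendsto_pow_atTop two_ne_zero).comp hL))
      (tendsto_atTop_add_const_right _ _ hc)
  refine tendsto_atTop_mono' l ?_ hmin
  filter_upwards [hL.eventually_ge_atTop 0, hc.eventually_ge_atTop 1] with k hL0 hc1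
  rcases le_or_gt (x k) 0 with hxk | hxk
  · simp [max_eq_right hxk]
  · rw [max_eq_left hxk.le]
    have hxL := hx k
    refine (min_le_right _ _).trans ?_
    -- `L² - (L - c + 1)² = (c - 1) (2L - c + 1) ≥ c - 1`, as `L > c ≥ 1` here
    nlinarith

lemma tendsto_natCast_mul_exp_neg_sq_div_two {n : α → ℕ} (hn : Tendsto n l atTop) {δ : ℝ}
    (hδ : 0 < δ) :
    Tendsto (fun k => n k * exp (-(√(2 * (1 + δ) * log (n k)) ^ 2 / 2))) l (𝓝 0) := by
  have hlog := tendsto_log_atTop.comp (tendsto_natCast_atTop_atTop.comp hn)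
  refine (tendsto_exp_atBot.comp (tendsto_neg_atTop_atBot.comp (hlog.const_mul_atTop hδ))).congr' ?_
  filter_upwards [hn.eventually_ne_atTop 0] with k hk
  calc exp (-(δ * log (n k)))
      = exp (log (n k)) * exp (-(2 * (1 + δ) * log (n k) / 2)) := by rw [← exp_add]; ring_nf
    _ = _ := by rw [exp_log (by positivity), sq_sqrt (by positivity)]

lemma tendsto_natCast_mul_gaussian_tail_atTop {n₀ n₁ : α → ℕ} (hn₀ : Tendsto n₀ l atTop)
    (hn₁ : Tendsto n₁ l atTop) {μ : α → ℝ} {δ ε : ℝ} (hδ : 0 ≤ δ) (hδε : δ < ε)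
    (hμ : ∀ k, √(2 * (1 + ε) * log (n₀ k)) - √(2 * log (n₁ k)) ≤ μ k) :
    Tendsto (fun k => n₁ k *
      (exp (-((max (√(2 * (1 + δ) * log (n₀ k)) - μ k) 0 + 1) ^ 2 / 2)) / √(2 * π))) l atTop := by
  have hsplit : ∀ γ : ℝ, 0 ≤ 1 + γ → ∀ k,
      √(2 * (1 + γ) * log (n₀ k)) = √(1 + γ) * √(2 * log (n₀ k)) := fun γ hγ k => by
    rw [mul_comm 2, mul_assoc, sqrt_mul hγ]
  have hgap : 0 < √(1 + ε) - √(1 + δ) := sub_pos.2 (sqrt_lt_sqrt (by linarith) (by linarith))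
  have hexponent := tendsto_sq_sub_sq_max_add_one_atTop (tendsto_sqrt_two_mul_log_atTop hn₁)
    ((tendsto_sqrt_two_mul_log_atTop hn₀).const_mul_atTop hgap)
    (x := fun k => √(2 * (1 + δ) * log (n₀ k)) - μ k) fun k => by
      have := hμ k
      rw [hsplit ε (by linarith) k] at this
      rw [hsplit δ (by linarith) k]
      linarith
  refine ((tendsto_exp_atTop.comp (hexponent.atTop_div_const two_pos)).atTop_div_const
    (by positivity : 0 < √(2 * π))).congr' ?_
  filter_upwards [hn₁.eventually_ne_atTop 0] with k hk
  rw [← exp_sqrt_two_mul_log_sq_div_two hk, mul_div_assoc', ← exp_add, Function.comp_apply]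
  ring_nf

end Asymptotics

/-- Two-group normal model: if `μ ≥ sqrt (2(1+ε) log |S₀|) - sqrt (2 log |S₁|)` for some
fixed `ε > 0`, then `P(max_{i ∈ S₁} X_i ≤ max_{i ∈ S₀} X_i) → 0` as `|S₀|, |S₁| → ∞`,
i.e. the signal subset exists with probability tending to one. -/
theorem signal_subset_exists
    {Ω : ℕ → Type*} [∀ k, MeasurableSpace (Ω k)]
    (P : ∀ k, Measure (Ω k)) [∀ k, IsProbabilityMeasure (P k)]
    (n₀ n₁ : ℕ → ℕ) (hn₀ : Tendsto n₀ atTop atTop) (hn₁ : Tendsto n₁ atTop atTop)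
    (μ : ℕ → ℝ) (ε : ℝ) (hε : 0 < ε)
    (X : ∀ k, (Fin (n₀ k) ⊕ Fin (n₁ k)) → Ω k → ℝ)
    (hmeas : ∀ k i, Measurable (X k i))
    (hindep : ∀ k, iIndepFun (X k) (P k))
    (hnoise : ∀ k i, Measure.map (X k (Sum.inl i)) (P k) = gaussianReal 0 1)
    (hsignal : ∀ k j, Measure.map (X k (Sum.inr j)) (P k) = gaussianReal (μ k) 1)
    (hμ : ∀ k, Real.sqrt (2 * (1 + ε) * Real.log (n₀ k))
        - Real.sqrt (2 * Real.log (n₁ k)) ≤ μ k) :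
    Tendsto
      (fun k => P k {ω | (⨆ j, X k (Sum.inr j) ω) ≤ ⨆ i, X k (Sum.inl i) ω})
      atTop (nhds 0) := by
  have hsignal_term := tendsto_exp_atBot.comp <| tendsto_neg_atTop_atBot.comp <|
    tendsto_natCast_mul_gaussian_tail_atTop hn₀ hn₁ (half_pos hε).le (half_lt_self hε) hμ
  have hbound := hsignal_term.add (tendsto_natCast_mul_exp_neg_sq_div_two hn₀ (half_pos hε))
  rw [zero_add] at hbound
  have hreal : Tendsto (fun k => (P k).real {ω | ⨆ j, X k (.inr j) ω ≤ ⨆ i, X k (.inl i) ω})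
      atTop (𝓝 0) := by
    refine squeeze_zero' (.of_forall fun k => measureReal_nonneg) ?_ hbound
    filter_upwards [hn₀.eventually_ne_atTop 0] with k hk
    have : NeZero (n₀ k) := ⟨hk⟩
    simpa using measureReal_iSup_inr_le_iSup_inl_le_of_gaussian (P k) (X k) (hmeas k)
      (hindep k) (μ k) (hnoise k) (hsignal k) (sqrt_nonneg _)
  simpa [ofReal_measureReal] using ENNReal.tendsto_ofReal hreal
end

section
/- Under the two-group normal model with independent observations, if μ ≤ sqrt(2(1-ε) log |S_0|) - sqrt(2 log |S_1|) for some fixed ε > 0, then P(max_{i∈S_1} X_i > max_{i∈S_0} X_i) → 0 as |S_0|, |S_1| → ∞; that is, with probability tending to 1 no signal observation exceeds all noise observations. -/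
/-!
Let `φ` be the standard normal density and take the threshold `t = √(2(1-ε) log n₀)`.
All `n₀` noise values stay below `t` with probability
`(1 - P(Z ≥ t))^{n₀} ≤ exp(-n₀ φ(t+1))`, and `n₀ φ(t+1) ≥ n₀^{ε/2} e^{-1/ε-1/2}/√(2π)` tends to
infinity. A signal value above `t` exceeds its mean by at least `√(2 log n₁)`; by Mills' ratio
and a union bound this has probability at most
`n₁ φ(√(2 log n₁)) / √(2 log n₁) ≤ 1 / √(2 log n₁)`, which tends to zero.
-/

open MeasureTheory ProbabilityTheory Filter Set
open Real Topology

lemma setOf_iSup_lt_iSup_subset {Ω ι κ : Type*} [Finite ι] [Nonempty κ]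
    (Y : ι → Ω → ℝ) (Z : κ → Ω → ℝ) (t : ℝ) :
    {ω | ⨆ i, Y i ω < ⨆ j, Z j ω} ⊆ (⋂ i, Y i ⁻¹' Iio t) ∪ ⋃ j, Z j ⁻¹' Ici t := by
  intro ω hω
  by_cases h : ∃ j, t ≤ Z j ω
  · obtain ⟨j, hj⟩ := h
    exact Or.inr (mem_iUnion.2 ⟨j, hj⟩)
  · push Not at h
    refine Or.inl (mem_iInter.2 fun i => ?_)
    calc Y i ω ≤ ⨆ i, Y i ω := le_ciSup (f := fun i => Y i ω) (finite_range _).bddAbove i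
      _ < ⨆ j, Z j ω := hω
      _ ≤ t := ciSup_le fun j => (h j).le

namespace ProbabilityTheory

lemma gaussianPDFReal_zero_one_apply (x : ℝ) :
    gaussianPDFReal 0 1 x = (√(2 * π))⁻¹ * exp (-(1 / 2) * x ^ 2) := by
  simp only [gaussianPDFReal, NNReal.coe_one, mul_one, sub_zero]
  congr 2
  ring

lemma hasDerivAt_gaussianPDFReal_zero_one (x : ℝ) :
    HasDerivAt (gaussianPDFReal 0 1) (-(x * gaussianPDFReal 0 1 x)) x := by
  have h : HasDerivAt (fun y : ℝ => -(1 / 2) * y ^ 2) (-x) x :=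
    ((hasDerivAt_pow 2 x).const_mul _).congr_deriv (by simp)
  simp_rw [funext gaussianPDFReal_zero_one_apply]
  exact (h.exp.const_mul _).congr_deriv (by ring)

lemma tendsto_gaussianPDFReal_zero_one_atTop :
    Tendsto (gaussianPDFReal 0 1) atTop (𝓝 0) := by
  simp_rw [funext gaussianPDFReal_zero_one_apply]
  have h : Tendsto (fun x : ℝ => -(1 / 2) * x ^ 2) atTop atBot :=
    (tendsto_pow_atTop two_ne_zero).const_mul_atTop_of_neg (by norm_num)
  simpa using (tendsto_exp_atBot.comp h).const_mul (√(2 * π))⁻¹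

lemma integrable_mul_gaussianPDFReal_zero_one :
    Integrable (fun x => x * gaussianPDFReal 0 1 x) := by
  simp_rw [gaussianPDFReal_zero_one_apply, mul_left_comm _ (√(2 * π))⁻¹]
  exact (integrable_mul_exp_neg_mul_sq (by norm_num)).const_mul _

lemma integral_Ioi_mul_gaussianPDFReal_zero_one (t : ℝ) :
    ∫ x in Ioi t, x * gaussianPDFReal 0 1 x = gaussianPDFReal 0 1 t := by
  simpa using integral_Ioi_of_hasDerivAt_of_tendsto' (f := fun x => -gaussianPDFReal 0 1 x)
    (fun x _ => (hasDerivAt_gaussianPDFReal_zero_one x).neg)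
    (by simpa using integrable_mul_gaussianPDFReal_zero_one.integrableOn)
    tendsto_gaussianPDFReal_zero_one_atTop.neg

lemma gaussianPDFReal_zero_one_antitoneOn : AntitoneOn (gaussianPDFReal 0 1) (Ici 0) := by
  intro x hx y _ hxy
  have hsq : x ^ 2 ≤ y ^ 2 := pow_le_pow_left₀ hx hxy 2
  rw [gaussianPDFReal_zero_one_apply, gaussianPDFReal_zero_one_apply]
  exact mul_le_mul_of_nonneg_left (exp_le_exp.2 (by linarith)) (by positivity)

lemma gaussianReal_real_eq_integral (μ : ℝ) {v : NNReal} (hv : v ≠ 0) (s : Set ℝ) :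
    (gaussianReal μ v).real s = ∫ x in s, gaussianPDFReal μ v x := by
  rw [measureReal_def, gaussianReal_apply_eq_integral μ hv,
    ENNReal.toReal_ofReal (setIntegral_nonneg_of_ae (ae_of_all _ (gaussianPDFReal_nonneg μ v)))]

lemma gaussianReal_real_Ici_le_gaussianPDFReal_div {t : ℝ} (ht : 0 < t) :
    (gaussianReal 0 1).real (Ici t) ≤ gaussianPDFReal 0 1 t / t := by
  rw [gaussianReal_real_eq_integral 0 one_ne_zero, integral_Ici_eq_integral_Ioi,
    ← integral_Ioi_mul_gaussianPDFReal_zero_one, div_eq_mul_inv, ← integral_mul_const]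
  refine setIntegral_mono_on (integrable_gaussianPDFReal 0 1).integrableOn
    (integrable_mul_gaussianPDFReal_zero_one.mul_const _).integrableOn measurableSet_Ioi
    fun x (hx : t < x) => ?_
  rw [mul_right_comm, ← div_eq_mul_inv]
  exact le_mul_of_one_le_left (gaussianPDFReal_nonneg 0 1 x) ((one_le_div ht).2 hx.le)

lemma gaussianPDFReal_add_one_le_gaussianReal_real_Ici {t : ℝ} (ht : 0 ≤ t) :
    gaussianPDFReal 0 1 (t + 1) ≤ (gaussianReal 0 1).real (Ici t) :=
  calc gaussianPDFReal 0 1 (t + 1) = ∫ _ in Ioc t (t + 1), gaussianPDFReal 0 1 (t + 1) := by simp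
    _ ≤ ∫ x in Ioc t (t + 1), gaussianPDFReal 0 1 x :=
      setIntegral_mono_on (integrableOn_const measure_Ioc_lt_top.ne)
        (integrable_gaussianPDFReal 0 1).integrableOn measurableSet_Ioc fun x hx =>
          gaussianPDFReal_zero_one_antitoneOn (mem_Ici.2 (ht.trans hx.1.le))
            (mem_Ici.2 (by linarith)) hx.2
    _ ≤ (gaussianReal 0 1).real (Ici t) := by
      rw [gaussianReal_real_eq_integral 0 one_ne_zero]
      exact setIntegral_mono_set (integrable_gaussianPDFReal 0 1).integrableOn
        (ae_of_all _ (gaussianPDFReal_nonneg 0 1)) (ae_of_all _ fun _ hx => mem_Ici.2 hx.1.le)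

lemma gaussianReal_Ici_eq_Ici_sub (μ t : ℝ) (v : NNReal) :
    gaussianReal μ v (Ici t) = gaussianReal 0 v (Ici (t - μ)) := by
  rw [← zero_add μ, ← gaussianReal_map_add_const, Measure.map_apply (measurable_add_const μ)
    measurableSet_Ici, zero_add]
  congr 1
  ext x
  simp

section Maxima

variable {Ω ι : Type*} [MeasurableSpace Ω] {P : Measure Ω}

lemma HasLaw.of_map_eq {𝓧 : Type*} [MeasurableSpace 𝓧] {X : Ω → 𝓧} {ν : Measure 𝓧} [NeZero ν]
    (h : P.map X = ν) : HasLaw X ν P :=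
  ⟨.of_map_ne_zero (h ▸ NeZero.ne ν), h⟩

lemma iIndepFun.measure_iInter_preimage_eq_pow [Fintype ι] {Y : ι → Ω → ℝ} {ν : Measure ℝ}
    (hY : iIndepFun Y P) (hlaw : ∀ i, HasLaw (Y i) ν P) {s : Set ℝ} (hs : MeasurableSet s) :
    P (⋂ i, Y i ⁻¹' s) = ν s ^ Fintype.card ι := by
  have hY_s : ∀ i, P (Y i ⁻¹' s) = ν s := fun i => (hlaw i).measure_eq (p := (· ∈ s)) hs
  simpa [hY_s] using hY.measure_inter_preimage_eq_mul Finset.univ (sets := fun _ => s) fun _ _ => hs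

lemma measure_iUnion_preimage_le [Fintype ι] {Z : ι → Ω → ℝ} {ν : Measure ℝ}
    (hlaw : ∀ i, HasLaw (Z i) ν P) {s : Set ℝ} (hs : MeasurableSet s) :
    P (⋃ i, Z i ⁻¹' s) ≤ Fintype.card ι * ν s := by
  have hZ_s : ∀ i, P (Z i ⁻¹' s) = ν s := fun i => (hlaw i).measure_eq (p := (· ∈ s)) hs
  calc P (⋃ i, Z i ⁻¹' s) ≤ ∑ i, P (Z i ⁻¹' s) := measure_iUnion_fintype_le _ _
    _ = Fintype.card ι * ν s := by simp [hZ_s]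

lemma measure_iSup_lt_iSup_le {κ : Type*} [Fintype ι] [Fintype κ] [Nonempty κ]
    {Y : ι → Ω → ℝ} {Z : κ → Ω → ℝ} {ν₀ ν₁ : Measure ℝ} (hY : iIndepFun Y P)
    (hYlaw : ∀ i, HasLaw (Y i) ν₀ P) (hZlaw : ∀ j, HasLaw (Z j) ν₁ P) (t : ℝ) :
    P {ω | ⨆ i, Y i ω < ⨆ j, Z j ω} ≤ ν₀ (Iio t) ^ Fintype.card ι + Fintype.card κ * ν₁ (Ici t) :=
  calc P {ω | ⨆ i, Y i ω < ⨆ j, Z j ω}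
      ≤ P (⋂ i, Y i ⁻¹' Iio t) + P (⋃ j, Z j ⁻¹' Ici t) :=
        (measure_mono (setOf_iSup_lt_iSup_subset Y Z t)).trans (measure_union_le _ _)
    _ ≤ _ := by
      rw [hY.measure_iInter_preimage_eq_pow hYlaw measurableSet_Iio]
      gcongr
      exact measure_iUnion_preimage_le hZlaw measurableSet_Ici

end Maxima

lemma gaussianReal_Iio_pow_le {t : ℝ} (ht : 0 ≤ t) (n : ℕ) :
    gaussianReal 0 1 (Iio t) ^ n ≤ ENNReal.ofReal (exp (-(n * gaussianPDFReal 0 1 (t + 1)))) := by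
  set r := (gaussianReal 0 1).real (Ici t)
  have hr : gaussianPDFReal 0 1 (t + 1) ≤ r := gaussianPDFReal_add_one_le_gaussianReal_real_Ici ht
  have hIio : (gaussianReal 0 1).real (Iio t) = 1 - r := by
    rw [← compl_Ici, measureReal_compl measurableSet_Ici, probReal_univ]
  rw [← ofReal_measureReal, ← ENNReal.ofReal_pow measureReal_nonneg, hIio]
  refine ENNReal.ofReal_le_ofReal ?_
  calc (1 - r) ^ n ≤ exp (-r) ^ n :=
        pow_le_pow_left₀ (hIio ▸ measureReal_nonneg) (one_sub_le_exp_neg r) n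
    _ = exp (-(n * r)) := by rw [← exp_nat_mul]; ring_nf
    _ ≤ exp (-(n * gaussianPDFReal 0 1 (t + 1))) := by gcongr

lemma exp_sub_le_exp_mul_gaussianPDFReal {ε L : ℝ} (hε : 0 < ε) (hε₁ : ε ≤ 1) (hL : 0 ≤ L) :
    exp (ε * L / 2 - 1 / ε - 1 / 2) / √(2 * π)
      ≤ exp L * gaussianPDFReal 0 1 (√(2 * (1 - ε) * L) + 1) := by
  set A := √(2 * (1 - ε) * L)
  set s := √(2 * L)
  have hA : A ^ 2 = 2 * (1 - ε) * L := sq_sqrt (by nlinarith)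
  have hs : s ^ 2 = 2 * L := sq_sqrt (by positivity)
  have hAs : A ≤ s := sqrt_le_sqrt (by nlinarith)
  -- AM-GM, in the form `(εs/2 - 1)² ≥ 0`
  have hs_le : s ≤ ε * L / 2 + 1 / ε := by
    have hsq : ε * L / 2 + 1 / ε - s = (ε * s / 2 - 1) ^ 2 / ε := by
      field_simp
      nlinarith [hs]
    linarith [show 0 ≤ (ε * s / 2 - 1) ^ 2 / ε by positivity]
  rw [gaussianPDFReal_zero_one_apply, div_eq_inv_mul, mul_left_comm, ← exp_add]
  gcongr
  nlinarith

lemma tendsto_gaussianReal_Iio_sqrt_log_pow {ε : ℝ} (hε : 0 < ε) (hε₁ : ε ≤ 1) :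
    Tendsto (fun n : ℕ => gaussianReal 0 1 (Iio √(2 * (1 - ε) * log n)) ^ n) atTop (𝓝 0) := by
  have hlog : Tendsto (fun n : ℕ => log n) atTop atTop :=
    tendsto_log_atTop.comp tendsto_natCast_atTop_atTop
  have hexponent : Tendsto (fun n : ℕ => ε * log n / 2 - 1 / ε - 1 / 2) atTop atTop := by
    simpa only [sub_eq_add_neg, add_assoc] using
      tendsto_atTop_add_const_right _ _ ((hlog.const_mul_atTop hε).atTop_div_const two_pos)
  have hmass : Tendsto (fun n : ℕ => n * gaussianPDFReal 0 1 (√(2 * (1 - ε) * log n) + 1))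
      atTop atTop := by
    refine tendsto_atTop_mono' atTop ?_
      ((tendsto_exp_atTop.comp hexponent).atTop_div_const (show 0 < √(2 * π) by positivity))
    filter_upwards [eventually_gt_atTop 0] with n hn
    simpa only [Function.comp_apply, exp_log (Nat.cast_pos.2 hn)] using
      exp_sub_le_exp_mul_gaussianPDFReal hε hε₁ (log_natCast_nonneg n)
  have hbound : Tendsto (fun n : ℕ => ENNReal.ofReal
      (exp (-(n * gaussianPDFReal 0 1 (√(2 * (1 - ε) * log n) + 1))))) atTop (𝓝 0) := by
    simpa using ENNReal.tendsto_ofReal (tendsto_exp_atBot.comp (tendsto_neg_atTop_atBot.comp hmass))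
  exact tendsto_of_tendsto_of_tendsto_of_le_of_le tendsto_const_nhds hbound (fun _ => zero_le)
    fun n => gaussianReal_Iio_pow_le (sqrt_nonneg _) n

lemma natCast_mul_gaussianReal_Ici_sqrt_log_le {n : ℕ} (hn : 2 ≤ n) :
    n * gaussianReal 0 1 (Ici √(2 * log n)) ≤ ENNReal.ofReal (1 / √(2 * log n)) := by
  have hlog : 0 < log n := log_pos (by exact_mod_cast hn)
  set B := √(2 * log n)
  have hB : 0 < B := sqrt_pos.2 (by positivity)
  have hnφ : n * gaussianPDFReal 0 1 B ≤ 1 := by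
    rw [gaussianPDFReal_zero_one_apply, sq_sqrt (by positivity), mul_left_comm,
      show -(1 / 2) * (2 * log n) = -log n by ring, exp_neg, exp_log (by positivity),
      mul_inv_cancel₀ (by positivity), mul_one]
    exact inv_le_one_of_one_le₀ (one_le_sqrt.2 (by linarith [pi_gt_three]))
  rw [← ofReal_measureReal, ← ENNReal.ofReal_natCast, ← ENNReal.ofReal_mul (by positivity)]
  refine ENNReal.ofReal_le_ofReal ?_
  calc n * (gaussianReal 0 1).real (Ici B) ≤ n * (gaussianPDFReal 0 1 B / B) :=
        mul_le_mul_of_nonneg_left (gaussianReal_real_Ici_le_gaussianPDFReal_div hB) (by positivity)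
    _ ≤ 1 / B := by rw [← mul_div_assoc]; gcongr

lemma tendsto_natCast_mul_gaussianReal_Ici_sqrt_log :
    Tendsto (fun n : ℕ => n * gaussianReal 0 1 (Ici √(2 * log n))) atTop (𝓝 0) := by
  have hbound : Tendsto (fun n : ℕ => ENNReal.ofReal (1 / √(2 * log n))) atTop (𝓝 0) := by
    have := (tendsto_log_atTop.comp tendsto_natCast_atTop_atTop).const_mul_atTop two_pos
    simpa using ENNReal.tendsto_ofReal (tendsto_inv_atTop_zero.comp (tendsto_sqrt_atTop.comp this))
  refine tendsto_of_tendsto_of_tendsto_of_le_of_le' tendsto_const_nhds hbound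
    (Eventually.of_forall fun _ => zero_le) ?_
  filter_upwards [eventually_ge_atTop 2] with n hn using natCast_mul_gaussianReal_Ici_sqrt_log_le hn

end ProbabilityTheory

theorem signal_subset_does_not_exist_general
    {Ω : ℕ → Type*} [∀ k, MeasurableSpace (Ω k)]
    (P : ∀ k, Measure (Ω k))
    (n₀ n₁ : ℕ → ℕ) (hn₀ : Tendsto n₀ atTop atTop) (hn₁ : Tendsto n₁ atTop atTop)
    (μ : ℕ → ℝ) (ε : ℝ) (hε : 0 < ε)
    (X : ∀ k, (Fin (n₀ k) ⊕ Fin (n₁ k)) → Ω k → ℝ)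
    (hindep : ∀ k, iIndepFun (X k) (P k))
    (hnoise : ∀ k i, Measure.map (X k (Sum.inl i)) (P k) = gaussianReal 0 1)
    (hsignal : ∀ k j, Measure.map (X k (Sum.inr j)) (P k) = gaussianReal (μ k) 1)
    (hμ : ∀ k, μ k ≤ Real.sqrt (2 * (1 - ε) * Real.log (n₀ k))
        - Real.sqrt (2 * Real.log (n₁ k))) :
    Tendsto
      (fun k => P k {ω | (⨆ i, X k (Sum.inl i) ω) < ⨆ j, X k (Sum.inr j) ω})
      atTop (nhds 0) := by
  -- replacing `ε` by `min ε 1` only weakens `hμ`, and avoids the junk value `√(negative) = 0`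
  set ε' := min ε 1
  set A := fun k => √(2 * (1 - ε') * log (n₀ k))
  set B := fun k => √(2 * log (n₁ k))
  have hbound : ∀ᶠ k in atTop, P k {ω | (⨆ i, X k (Sum.inl i) ω) < ⨆ j, X k (Sum.inr j) ω}
      ≤ gaussianReal 0 1 (Iio (A k)) ^ n₀ k + n₁ k * gaussianReal 0 1 (Ici (B k)) := by
    filter_upwards [hn₁.eventually_ge_atTop 1] with k hk
    have : Nonempty (Fin (n₁ k)) := ⟨⟨0, hk⟩⟩
    have hBA : B k ≤ A k - μ k := by
      have : √(2 * (1 - ε) * log (n₀ k)) ≤ A k := sqrt_le_sqrt (by gcongr; exact min_le_left _ _)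
      linarith [hμ k]
    calc _ ≤ gaussianReal 0 1 (Iio (A k)) ^ n₀ k + n₁ k * gaussianReal (μ k) 1 (Ici (A k)) := by
          simpa using measure_iSup_lt_iSup_le ((hindep k).precomp Sum.inl_injective)
            (fun i => .of_map_eq (hnoise k i)) (fun j => .of_map_eq (hsignal k j)) (A k)
      _ ≤ _ := by
          rw [gaussianReal_Ici_eq_Ici_sub]
          gcongr
  have hlim := ((tendsto_gaussianReal_Iio_sqrt_log_pow (lt_min hε one_pos) (min_le_right _ _)).comp
    hn₀).add (tendsto_natCast_mul_gaussianReal_Ici_sqrt_log.comp hn₁)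
  rw [add_zero] at hlim
  exact tendsto_of_tendsto_of_tendsto_of_le_of_le' tendsto_const_nhds hlim
    (Eventually.of_forall fun _ => zero_le) hbound

/-- Two-group normal model: if `μ ≤ sqrt (2(1-ε) log |S₀|) - sqrt (2 log |S₁|)` for some
fixed `ε > 0`, then `P(max_{i ∈ S₁} X_i > max_{i ∈ S₀} X_i) → 0` as `|S₀|, |S₁| → ∞`,
i.e. with probability tending to one no signal observation exceeds all noise observations. -/
theorem signal_subset_does_not_exist
    {Ω : ℕ → Type*} [∀ k, MeasurableSpace (Ω k)]
    (P : ∀ k, Measure (Ω k)) [∀ k, IsProbabilityMeasure (P k)]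
    (n₀ n₁ : ℕ → ℕ) (hn₀ : Tendsto n₀ atTop atTop) (hn₁ : Tendsto n₁ atTop atTop)
    (μ : ℕ → ℝ) (ε : ℝ) (hε : 0 < ε)
    (X : ∀ k, (Fin (n₀ k) ⊕ Fin (n₁ k)) → Ω k → ℝ)
    (hmeas : ∀ k i, Measurable (X k i))
    (hindep : ∀ k, iIndepFun (X k) (P k))
    (hnoise : ∀ k i, Measure.map (X k (Sum.inl i)) (P k) = gaussianReal 0 1)
    (hsignal : ∀ k j, Measure.map (X k (Sum.inr j)) (P k) = gaussianReal (μ k) 1)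
    (hμ : ∀ k, μ k ≤ Real.sqrt (2 * (1 - ε) * Real.log (n₀ k))
        - Real.sqrt (2 * Real.log (n₁ k))) :
    Tendsto
      (fun k => P k {ω | (⨆ i, X k (Sum.inl i) ω) < ⨆ j, X k (Sum.inr j) ω})
      atTop (nhds 0) :=
  signal_subset_does_not_exist_general P n₀ n₁ hn₀ hn₁ μ ε hε X hindep hnoise hsignal hμ
end

section
/- Under the two-group normal model, if μ ≥ sqrt(2(1+ε) log |S_0|) + sqrt(2 log |S_1|) for some fixed ε > 0, then P(min_{i∈S_1} X_i ≤ max_{i∈S_0} X_i) → 0 as |S_0|, |S_1| → ∞; that is, with probability tending to 1 every signal observation exceeds every noise observation and the indistinguishable subset is empty. -/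
open MeasureTheory ProbabilityTheory Filter Set Real
open scoped ENNReal NNReal Topology

/-! Union bound at the threshold `t = √(2(1+ε) log n₀)`: if the smallest signal value is at most
the largest noise value, then some noise value is `≥ t` or some signal value is `≤ t`.
The Gaussian tail bound `P(Z ≥ a) ≤ e^{-a²/2} / a` (from `φ(x) ≤ e^{a²/2 - a x}`) makes the
first event cost `n₀ · n₀^{-(1+ε)} / t = n₀^{-ε} / t`. A signal value `X_j ≤ t` forces
`μ - X_j ≥ μ - t ≥ s = √(2 log n₁)`, where `μ - X_j` is standard normal, so the second event
costs `n₁ · n₁⁻¹ / s = 1 / s`. Both bounds tend to `0`. -/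

lemma gaussianPDFReal_zero_one_le (a x : ℝ) :
    gaussianPDFReal 0 1 x ≤ exp (a ^ 2 / 2) * exp (-a * x) := by
  have hnorm : (√(2 * π))⁻¹ ≤ 1 :=
    inv_le_one_of_one_le₀ (one_le_sqrt.2 (by nlinarith [pi_gt_three]))
  rw [gaussianPDFReal, ← exp_add]
  push_cast
  calc (√(2 * π * 1))⁻¹ * exp (-(x - 0) ^ 2 / (2 * 1))
      ≤ 1 * exp (-(x - 0) ^ 2 / (2 * 1)) := by
        rw [mul_one]; exact mul_le_mul_of_nonneg_right hnorm (exp_pos _).le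
    _ ≤ exp (a ^ 2 / 2 + -a * x) := by
        rw [one_mul, exp_le_exp]; nlinarith [sq_nonneg (x - a)]

lemma gaussianReal_Ici_le {a : ℝ} (ha : 0 < a) :
    gaussianReal 0 1 (Ici a) ≤ ENNReal.ofReal (exp (-(a ^ 2 / 2)) / a) := by
  rw [gaussianReal_apply_eq_integral 0 one_ne_zero]
  refine ENNReal.ofReal_le_ofReal ?_
  calc ∫ x in Ici a, gaussianPDFReal 0 1 x
      ≤ ∫ x in Ioi a, exp (a ^ 2 / 2) * exp (-a * x) := by
        rw [integral_Ici_eq_integral_Ioi]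
        exact setIntegral_mono_on (integrable_gaussianPDFReal 0 1).integrableOn
          ((integrableOn_exp_mul_Ioi (neg_lt_zero.2 ha) a).const_mul _) measurableSet_Ioi
          fun x _ ↦ gaussianPDFReal_zero_one_le a x
    _ = exp (-(a ^ 2 / 2)) / a := by
        rw [integral_const_mul, integral_exp_mul_Ioi (neg_lt_zero.2 ha), neg_div_neg_eq,
          mul_div_assoc', ← exp_add]
        ring_nf

lemma tendsto_rpow_one_sub_div_sqrt_log {c : ℝ} (hc : 1 ≤ c) :
    Tendsto (fun x : ℝ ↦ x ^ (1 - c) / √(2 * c * log x)) atTop (𝓝 0) := by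
  have hinv : Tendsto (fun x : ℝ ↦ (√(2 * c * log x))⁻¹) atTop (𝓝 0) :=
    tendsto_inv_atTop_zero.comp <| tendsto_sqrt_atTop.comp <|
      tendsto_log_atTop.const_mul_atTop (by positivity)
  refine tendsto_of_tendsto_of_tendsto_of_le_of_le' tendsto_const_nhds hinv ?_ ?_
  · filter_upwards [eventually_ge_atTop 0] with x hx
    positivity
  · filter_upwards [eventually_ge_atTop 1] with x hx
    rw [← one_div]
    exact div_le_div_of_nonneg_right (rpow_le_one_of_one_le_of_nonpos hx (by linarith))
      (sqrt_nonneg _)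

lemma measure_iUnion_le_card_mul {α ι : Type*} [MeasurableSpace α] [Fintype ι] (P : Measure α)
    {s : ι → Set α} {c : ℝ≥0∞} (h : ∀ i, P (s i) ≤ c) :
    P (⋃ i, s i) ≤ Fintype.card ι * c :=
  calc P (⋃ i, s i) ≤ ∑ i, P (s i) := measure_iUnion_fintype_le P s
    _ ≤ ∑ _i : ι, c := Finset.sum_le_sum fun i _ ↦ h i
    _ = Fintype.card ι * c := by simp

lemma setOf_iInf_le_iSup_subset {Ω ι κ : Type*} [Finite ι] [Nonempty ι] [Finite κ] [Nonempty κ]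
    (Y : κ → Ω → ℝ) (Z : ι → Ω → ℝ) (t : ℝ) :
    {ω | (⨅ j, Y j ω) ≤ ⨆ i, Z i ω} ⊆ (⋃ i, {ω | t ≤ Z i ω}) ∪ ⋃ j, {ω | Y j ω ≤ t} := by
  intro ω hω
  by_contra hout
  simp only [mem_union, mem_iUnion, mem_ofPred_eq, not_or, not_exists, not_le] at hout hω
  obtain ⟨i, hi⟩ := exists_eq_ciSup_of_finite (f := fun i ↦ Z i ω)
  obtain ⟨j, hj⟩ := exists_eq_ciInf_of_finite (f := fun j ↦ Y j ω)
  rw [← hi, ← hj] at hω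
  linarith [hout.1 i, hout.2 j]

lemma ProbabilityTheory.HasLaw.of_map_eq_s4 {Ω 𝓧 : Type*} [MeasurableSpace Ω] [MeasurableSpace 𝓧]
    {P : Measure Ω} {ν : Measure 𝓧} [NeZero ν] {X : Ω → 𝓧} (h : P.map X = ν) : HasLaw X ν P :=
  ⟨.of_map_ne_zero (h ▸ NeZero.ne ν), h⟩

lemma ProbabilityTheory.HasLaw.measure_setOf_le_le_gaussianReal_Ici {Ω : Type*}
    [MeasurableSpace Ω] {P : Measure Ω} {X : Ω → ℝ} {m : ℝ} {v : ℝ≥0}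
    (hX : HasLaw X (gaussianReal m v) P) {s t : ℝ}
    (hst : s ≤ m - t) : P {ω | X ω ≤ t} ≤ gaussianReal 0 v (Ici s) := by
  have hcentred : HasLaw (fun ω ↦ m - X ω) (gaussianReal 0 v) P := by
    simpa using gaussianReal_const_sub hX m
  calc P {ω | X ω ≤ t} ≤ P {ω | s ≤ m - X ω} := measure_mono fun ω (hω : X ω ≤ t) ↦ by
        simp only [mem_ofPred_eq]; linarith
    _ = gaussianReal 0 v (Ici s) := hcentred.measure_eq measurableSet_Ici

lemma natCast_mul_gaussianReal_Ici_sqrt_log_le {c : ℝ} (hc : 0 < c) {n : ℕ} (hn : 2 ≤ n) :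
    (n : ℝ≥0∞) * gaussianReal 0 1 (Ici √(2 * c * log n)) ≤
      ENNReal.ofReal ((n : ℝ) ^ (1 - c) / √(2 * c * log n)) := by
  have hn₁ : (1 : ℝ) < n := by exact_mod_cast hn
  have hlog : 0 < 2 * c * log n := by have := log_pos hn₁; positivity
  set a := √(2 * c * log n)
  have hexp : (n : ℝ) * exp (-(a ^ 2 / 2)) = (n : ℝ) ^ (1 - c) := by
    rw [sq_sqrt hlog.le, rpow_def_of_pos (by positivity)]
    nth_rw 1 [← exp_log (by positivity : (0 : ℝ) < n)]
    rw [← exp_add]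
    ring_nf
  calc (n : ℝ≥0∞) * gaussianReal 0 1 (Ici a)
      ≤ ENNReal.ofReal n * ENNReal.ofReal (exp (-(a ^ 2 / 2)) / a) := by
        rw [ENNReal.ofReal_natCast]; gcongr; exact gaussianReal_Ici_le (sqrt_pos.2 hlog)
    _ = ENNReal.ofReal ((n : ℝ) ^ (1 - c) / a) := by
        rw [← ENNReal.ofReal_mul (Nat.cast_nonneg n), ← mul_div_assoc, hexp]

theorem indistinguishable_subset_empty_general
    {Ω : ℕ → Type*} [∀ k, MeasurableSpace (Ω k)]
    (P : ∀ k, Measure (Ω k))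
    (n₀ n₁ : ℕ → ℕ) (hn₀ : Tendsto n₀ atTop atTop) (hn₁ : Tendsto n₁ atTop atTop)
    (μ : ℕ → ℝ) (ε : ℝ) (hε : 0 < ε)
    (X : ∀ k, (Fin (n₀ k) ⊕ Fin (n₁ k)) → Ω k → ℝ)
    (hnoise : ∀ k i, Measure.map (X k (Sum.inl i)) (P k) = gaussianReal 0 1)
    (hsignal : ∀ k j, Measure.map (X k (Sum.inr j)) (P k) = gaussianReal (μ k) 1)
    (hμ : ∀ k, Real.sqrt (2 * (1 + ε) * Real.log (n₀ k))
        + Real.sqrt (2 * Real.log (n₁ k)) ≤ μ k) :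
    Tendsto
      (fun k => P k {ω | (⨅ j, X k (Sum.inr j) ω) ≤ ⨆ i, X k (Sum.inl i) ω})
      atTop (nhds 0) := by
  have hbound := (ENNReal.tendsto_ofReal <|
    (tendsto_rpow_one_sub_div_sqrt_log (c := 1 + ε) (by linarith)).comp
      (tendsto_natCast_atTop_atTop.comp hn₀)).add
    (ENNReal.tendsto_ofReal <| (tendsto_rpow_one_sub_div_sqrt_log (c := 1) le_rfl).comp
      (tendsto_natCast_atTop_atTop.comp hn₁))
  rw [ENNReal.ofReal_zero, add_zero] at hbound
  refine tendsto_of_tendsto_of_tendsto_of_le_of_le' tendsto_const_nhds hbound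
    (.of_forall fun _ ↦ zero_le) ?_
  filter_upwards [hn₀.eventually_ge_atTop 2, hn₁.eventually_ge_atTop 2] with k hk₀ hk₁
  have : Nonempty (Fin (n₀ k)) := ⟨⟨0, by omega⟩⟩
  have : Nonempty (Fin (n₁ k)) := ⟨⟨0, by omega⟩⟩
  set t := √(2 * (1 + ε) * log (n₀ k))
  have hnoise_tail (i) : P k {ω | t ≤ X k (.inl i) ω} = gaussianReal 0 1 (Ici t) :=
    (HasLaw.of_map_eq_s4 (hnoise k i)).measure_eq measurableSet_Ici
  have hsignal_tail (j) :
      P k {ω | X k (.inr j) ω ≤ t} ≤ gaussianReal 0 1 (Ici √(2 * 1 * log (n₁ k))) :=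
    (HasLaw.of_map_eq_s4 (hsignal k j)).measure_setOf_le_le_gaussianReal_Ici (by
      rw [mul_one]; linarith [hμ k])
  refine le_trans ?_ (add_le_add (natCast_mul_gaussianReal_Ici_sqrt_log_le (by linarith) hk₀)
    (natCast_mul_gaussianReal_Ici_sqrt_log_le one_pos hk₁))
  calc P k {ω | (⨅ j, X k (.inr j) ω) ≤ ⨆ i, X k (.inl i) ω}
      ≤ P k (⋃ i, {ω | t ≤ X k (.inl i) ω}) + P k (⋃ j, {ω | X k (.inr j) ω ≤ t}) :=
        (measure_mono (setOf_iInf_le_iSup_subset _ _ t)).trans (measure_union_le _ _)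
    _ ≤ n₀ k * gaussianReal 0 1 (Ici t) +
          n₁ k * gaussianReal 0 1 (Ici √(2 * 1 * log (n₁ k))) := by
        gcongr
        · simpa using measure_iUnion_le_card_mul (P k) fun i ↦ (hnoise_tail i).le
        · simpa using measure_iUnion_le_card_mul (P k) hsignal_tail

/-- Two-group normal model: if `μ ≥ sqrt (2(1+ε) log |S₀|) + sqrt (2 log |S₁|)` for some
fixed `ε > 0`, then `P(min_{i ∈ S₁} X_i ≤ max_{i ∈ S₀} X_i) → 0` as `|S₀|, |S₁| → ∞`,
i.e. with probability tending to one every signal observation exceeds every noise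
observation and the indistinguishable subset is empty. -/
theorem indistinguishable_subset_empty
    {Ω : ℕ → Type*} [∀ k, MeasurableSpace (Ω k)]
    (P : ∀ k, Measure (Ω k)) [∀ k, IsProbabilityMeasure (P k)]
    (n₀ n₁ : ℕ → ℕ) (hn₀ : Tendsto n₀ atTop atTop) (hn₁ : Tendsto n₁ atTop atTop)
    (μ : ℕ → ℝ) (ε : ℝ) (hε : 0 < ε)
    (X : ∀ k, (Fin (n₀ k) ⊕ Fin (n₁ k)) → Ω k → ℝ)
    (hmeas : ∀ k i, Measurable (X k i))
    (hindep : ∀ k, iIndepFun (X k) (P k))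
    (hnoise : ∀ k i, Measure.map (X k (Sum.inl i)) (P k) = gaussianReal 0 1)
    (hsignal : ∀ k j, Measure.map (X k (Sum.inr j)) (P k) = gaussianReal (μ k) 1)
    (hμ : ∀ k, Real.sqrt (2 * (1 + ε) * Real.log (n₀ k))
        + Real.sqrt (2 * Real.log (n₁ k)) ≤ μ k) :
    Tendsto
      (fun k => P k {ω | (⨅ j, X k (Sum.inr j) ω) ≤ ⨆ i, X k (Sum.inl i) ω})
      atTop (nhds 0) :=
  indistinguishable_subset_empty_general P n₀ n₁ hn₀ hn₁ μ ε hε X hnoise hsignal hμ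
end

section
/- Under the two-group normal model, if μ ≤ sqrt(2(1-ε) log |S_0|) + sqrt(2 log |S_1|) for some fixed ε > 0, then P(min_{i∈S_1} X_i > max_{i∈S_0} X_i) → 0 as |S_0|, |S_1| → ∞; that is, with probability tending to 1 at least one signal observation is mixed into the range of the noise. -/
/-!
Let `θ = √(max (1 - ε) 0) < 1`, `r = √(2 log n₀)`, and split at the threshold
`t = (1 + θ)/2 · r`. If the noise maximum is below the signal minimum, then all noise lies
below `t` or all signal lies above `t`. By independence these events have probabilities
`(1 - p₀)^n₀ ≤ exp (-n₀ p₀)` and `(1 - p₁)^n₁ ≤ exp (-n₁ p₁)`, where `p₀ = P(Z ≥ t)` and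
`p₁ = P(Z ≥ μ - t)` for a standard normal `Z`, and a tail `P(Z ≥ s)` with `s ≥ 0` is at least
the density at `s + 1`. As `t` is a fixed fraction `< 1` of `r`, `n₀ p₀ → ∞`; as
`μ - t ≤ √(2 log n₁) - (1 - θ)/2 · r` with a margin `(1 - θ)/2 · r → ∞`, also `n₁ p₁ → ∞`.
-/

open MeasureTheory ProbabilityTheory Filter Set

open scoped ENNReal NNReal Topology

lemma forall_lt_or_forall_lt_of_iSup_lt_iInf {ι κ : Type*} [Finite ι] [Finite κ]
    {f : ι → ℝ} {g : κ → ℝ} (h : ⨆ i, f i < ⨅ j, g j) (t : ℝ) :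
    (∀ i, f i < t) ∨ ∀ j, t < g j := by
  by_cases hg : ∀ j, t < g j
  · exact .inr hg
  push Not at hg
  obtain ⟨j, hj⟩ := hg
  exact .inl fun i => (le_ciSup (Finite.bddAbove_range f) i).trans_lt
    (h.trans_le ((ciInf_le (Finite.bddBelow_range g) j).trans hj))

lemma ProbabilityTheory.iIndepFun.measure_iInter_preimage_eq_pow_s5 {Ω ι β : Type*}
    [MeasurableSpace Ω] [MeasurableSpace β] [Fintype ι] {P : Measure Ω} {X : ι → Ω → β}
    {ν : Measure β} (hX : iIndepFun X P) (hmeas : ∀ i, Measurable (X i))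
    (hlaw : ∀ i, P.map (X i) = ν) {B : Set β} (hB : MeasurableSet B) :
    P (⋂ i, X i ⁻¹' B) = ν B ^ Fintype.card ι := by
  rw [hX.meas_iInter fun i => ⟨B, hB, rfl⟩]
  simp_rw [← Measure.map_apply (hmeas _) hB, hlaw, Finset.prod_const, Finset.card_univ]

lemma measure_iSup_lt_iInf_le {Ω ι κ : Type*} [MeasurableSpace Ω] [Fintype ι] [Fintype κ]
    {P : Measure Ω} {X : ι ⊕ κ → Ω → ℝ} (hX : iIndepFun X P) (hmeas : ∀ i, Measurable (X i))
    {ν₀ ν₁ : Measure ℝ} (h₀ : ∀ i, P.map (X (.inl i)) = ν₀) (h₁ : ∀ j, P.map (X (.inr j)) = ν₁)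
    (t : ℝ) :
    P {ω | ⨆ i, X (.inl i) ω < ⨅ j, X (.inr j) ω}
      ≤ ν₀ (Iio t) ^ Fintype.card ι + ν₁ (Ioi t) ^ Fintype.card κ :=
  calc _ ≤ P ((⋂ i, X (.inl i) ⁻¹' Iio t) ∪ ⋂ j, X (.inr j) ⁻¹' Ioi t) :=
        measure_mono fun ω hω => by
          simpa using forall_lt_or_forall_lt_of_iSup_lt_iInf hω t
    _ ≤ _ := measure_union_le _ _
    _ = _ := by
      rw [(hX.precomp Sum.inl_injective).measure_iInter_preimage_eq_pow_s5 (fun _ => hmeas _) h₀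
          measurableSet_Iio,
        (hX.precomp Sum.inr_injective).measure_iInter_preimage_eq_pow_s5 (fun _ => hmeas _) h₁
          measurableSet_Ioi]

lemma gaussianPDFReal_zero_le {m x y : ℝ} {v : ℝ≥0} (h : |x - m| ≤ |y|) :
    gaussianPDFReal 0 v y ≤ gaussianPDFReal m v x := by
  simp only [gaussianPDFReal, sub_zero]
  gcongr ?_ * Real.exp (- ?_ / _)
  exact sq_le_sq.2 h

lemma ofReal_gaussianPDFReal_le_gaussianReal_Icc {m a y : ℝ} {v : ℝ≥0} (hv : v ≠ 0)
    (h : ∀ x ∈ Icc a (a + 1), |x - m| ≤ |y|) :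
    ENNReal.ofReal (gaussianPDFReal 0 v y) ≤ gaussianReal m v (Icc a (a + 1)) := by
  calc ENNReal.ofReal (gaussianPDFReal 0 v y)
      = ∫⁻ _ in Icc a (a + 1), ENNReal.ofReal (gaussianPDFReal 0 v y) := by simp
    _ ≤ ∫⁻ x in Icc a (a + 1), gaussianPDF m v x :=
        setLIntegral_mono (measurable_gaussianPDF m v) fun x hx =>
          ENNReal.ofReal_le_ofReal (gaussianPDFReal_zero_le (h x hx))
    _ = gaussianReal m v (Icc a (a + 1)) := (gaussianReal_apply m hv _).symm

lemma gaussianReal_Iio_le {m t : ℝ} {v : ℝ≥0} (hv : v ≠ 0) :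
    gaussianReal m v (Iio t) ≤ 1 - ENNReal.ofReal (gaussianPDFReal 0 v (max (t - m) 0 + 1)) := by
  obtain ⟨hts, hs⟩ : t - m ≤ max (t - m) 0 ∧ 0 ≤ max (t - m) 0 := ⟨le_max_left .., le_max_right ..⟩
  set s := max (t - m) 0
  rw [← compl_Ici, prob_compl_eq_one_sub measurableSet_Ici]
  gcongr
  calc _ ≤ gaussianReal m v (Icc (m + s) (m + s + 1)) :=
        ofReal_gaussianPDFReal_le_gaussianReal_Icc hv fun x hx => by
          rw [abs_of_nonneg (by linarith : (0:ℝ) ≤ s + 1), abs_le]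
          constructor <;> linarith [hx.1, hx.2]
    _ ≤ _ := measure_mono fun x hx => by simp only [mem_Ici]; linarith [hx.1]

lemma gaussianReal_Ioi_le {m t : ℝ} {v : ℝ≥0} (hv : v ≠ 0) :
    gaussianReal m v (Ioi t) ≤ 1 - ENNReal.ofReal (gaussianPDFReal 0 v (max (m - t) 0 + 1)) := by
  obtain ⟨hts, hs⟩ : m - t ≤ max (m - t) 0 ∧ 0 ≤ max (m - t) 0 := ⟨le_max_left .., le_max_right ..⟩
  set s := max (m - t) 0
  rw [← compl_Iic, prob_compl_eq_one_sub measurableSet_Iic]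
  gcongr
  calc _ ≤ gaussianReal m v (Icc (m - s - 1) (m - s - 1 + 1)) :=
        ofReal_gaussianPDFReal_le_gaussianReal_Icc hv fun x hx => by
          rw [abs_of_nonneg (by linarith : (0:ℝ) ≤ s + 1), abs_le]
          constructor <;> linarith [hx.1, hx.2]
    _ ≤ _ := measure_mono fun x hx => by simp only [mem_Iic]; linarith [hx.2]

lemma one_sub_ofReal_pow_le_ofReal_exp {p : ℝ} (hp : 0 ≤ p) (n : ℕ) :
    (1 - ENNReal.ofReal p) ^ n ≤ ENNReal.ofReal (Real.exp (-(n * p))) :=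
  calc (1 - ENNReal.ofReal p) ^ n = ENNReal.ofReal (1 - p) ^ n := by
        rw [ENNReal.ofReal_sub _ hp, ENNReal.ofReal_one]
    _ ≤ ENNReal.ofReal (Real.exp (-p)) ^ n := by gcongr; exact Real.one_sub_le_exp_neg p
    _ = _ := by rw [← ENNReal.ofReal_pow (Real.exp_nonneg _), ← Real.exp_nat_mul, mul_neg]

lemma natCast_mul_gaussianPDFReal {n : ℕ} (hn : n ≠ 0) (x : ℝ) :
    n * gaussianPDFReal 0 1 x = (√(2 * Real.pi))⁻¹ * Real.exp (Real.log n - x ^ 2 / 2) := by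
  rw [Real.exp_sub, Real.exp_log (by positivity)]
  simp only [gaussianPDFReal, NNReal.coe_one, mul_one, sub_zero, neg_div, Real.exp_neg]
  ring

lemma tendsto_one_sub_ofReal_gaussianPDFReal_pow {α : Type*} {l : Filter α} {n : α → ℕ}
    {x : α → ℝ} (h : Tendsto (fun k => Real.log (n k) - x k ^ 2 / 2) l atTop) :
    Tendsto (fun k => (1 - ENNReal.ofReal (gaussianPDFReal 0 1 (x k))) ^ n k) l (𝓝 0) := by
  have hmul : Tendsto (fun k => n k * gaussianPDFReal 0 1 (x k)) l atTop := by
    refine (Tendsto.const_mul_atTop (by positivity : (0 : ℝ) < (√(2 * Real.pi))⁻¹)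
      (Real.tendsto_exp_atTop.comp h)).congr' ?_
    filter_upwards [h.eventually_gt_atTop 0] with k hk
    have hn : n k ≠ 0 := by
      rintro hn
      simp only [hn, CharP.cast_eq_zero, Real.log_zero, zero_sub] at hk
      nlinarith [sq_nonneg (x k)]
    exact (natCast_mul_gaussianPDFReal hn _).symm
  have hexp := ENNReal.tendsto_ofReal
    (Real.tendsto_exp_atBot.comp (tendsto_neg_atTop_atBot.comp hmul))
  rw [ENNReal.ofReal_zero] at hexp
  exact tendsto_of_tendsto_of_tendsto_of_le_of_le tendsto_const_nhds hexp (fun _ => zero_le)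
    fun k => one_sub_ofReal_pow_le_ofReal_exp (gaussianPDFReal_nonneg ..) _

lemma tendsto_sq_sub_sq_mul_add_one {α : Type*} {l : Filter α} {r : α → ℝ}
    (hr : Tendsto r l atTop) {a : ℝ} (ha : |a| < 1) :
    Tendsto (fun k => r k ^ 2 - (a * r k + 1) ^ 2) l atTop := by
  obtain ⟨ha₁, ha₂⟩ := abs_lt.1 ha
  have h₁ : Tendsto (fun k => (1 - a) * r k - 1) l atTop :=
    tendsto_atTop_add_const_right _ _ (hr.const_mul_atTop (by linarith))
  have h₂ : Tendsto (fun k => (1 + a) * r k + 1) l atTop :=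
    tendsto_atTop_add_const_right _ _ (hr.const_mul_atTop (by linarith))
  exact (h₁.atTop_mul_atTop₀ h₂).congr fun k => by ring

lemma min_sq_sub_one_le_sq_sub_sq_max_add_one {b c d : ℝ} (hd : 1 ≤ d) (hc : c ≤ b - d) :
    min (b ^ 2) (d ^ 2) - 1 ≤ b ^ 2 - (max c 0 + 1) ^ 2 := by
  rcases le_total c 0 with hc₀ | hc₀
  · rw [max_eq_right hc₀]
    linarith [min_le_left (b ^ 2) (d ^ 2)]
  · rw [max_eq_left hc₀]
    nlinarith [min_le_right (b ^ 2) (d ^ 2), mul_nonneg (sub_nonneg.2 hd) hc₀]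

lemma tendsto_sq_sub_sq_max_add_one {α : Type*} {l : Filter α} {b c d : α → ℝ}
    (hb : Tendsto b l atTop) (hd : Tendsto d l atTop) (hc : ∀ k, c k ≤ b k - d k) :
    Tendsto (fun k => b k ^ 2 - (max (c k) 0 + 1) ^ 2) l atTop := by
  have hsq := tendsto_pow_atTop (α := ℝ) two_ne_zero
  refine tendsto_atTop_mono' l ?_ (tendsto_atTop_add_const_right _ (-1)
    (tendsto_inf_atTop l (hsq.comp hb) (hsq.comp hd)))
  filter_upwards [hd.eventually_ge_atTop 1] with k hk
  simpa [Function.comp_def, sub_eq_add_neg] using min_sq_sub_one_le_sq_sub_sq_max_add_one hk (hc k)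

lemma tendsto_sqrt_two_mul_log {α : Type*} {l : Filter α} {n : α → ℕ}
    (hn : Tendsto n l atTop) : Tendsto (fun k => √(2 * Real.log (n k))) l atTop :=
  Real.tendsto_sqrt_atTop.comp
    ((Real.tendsto_log_atTop.comp (tendsto_natCast_atTop_atTop.comp hn)).const_mul_atTop two_pos)

lemma sqrt_two_mul_mul_le {c x : ℝ} (hx : 0 ≤ x) :
    √(2 * c * x) ≤ √(max c 0) * √(2 * x) :=
  calc √(2 * c * x) ≤ √(max c 0 * (2 * x)) :=
        Real.sqrt_le_sqrt (by nlinarith [le_max_left c 0])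
    _ = √(max c 0) * √(2 * x) := Real.sqrt_mul (le_max_right _ _) _

theorem indistinguishable_subset_exists_general
    {Ω : ℕ → Type*} [∀ k, MeasurableSpace (Ω k)]
    (P : ∀ k, Measure (Ω k))
    (n₀ n₁ : ℕ → ℕ) (hn₀ : Tendsto n₀ atTop atTop) (hn₁ : Tendsto n₁ atTop atTop)
    (μ : ℕ → ℝ) (ε : ℝ) (hε : 0 < ε)
    (X : ∀ k, (Fin (n₀ k) ⊕ Fin (n₁ k)) → Ω k → ℝ)
    (hmeas : ∀ k i, Measurable (X k i))
    (hindep : ∀ k, iIndepFun (X k) (P k))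
    (hnoise : ∀ k i, Measure.map (X k (Sum.inl i)) (P k) = gaussianReal 0 1)
    (hsignal : ∀ k j, Measure.map (X k (Sum.inr j)) (P k) = gaussianReal (μ k) 1)
    (hμ : ∀ k, μ k ≤ Real.sqrt (2 * (1 - ε) * Real.log (n₀ k))
        + Real.sqrt (2 * Real.log (n₁ k))) :
    Tendsto
      (fun k => P k {ω | (⨆ i, X k (Sum.inl i) ω) < ⨅ j, X k (Sum.inr j) ω})
      atTop (nhds 0) := by
  set θ := √(max (1 - ε) 0)
  have hθ₀ : 0 ≤ θ := Real.sqrt_nonneg _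
  have hθ₁ : θ < 1 := (Real.sqrt_lt' one_pos).2 <| by
    rw [one_pow]; exact max_lt (by linarith) one_pos
  set r := fun k => √(2 * Real.log (n₀ k))
  set t := fun k => (1 + θ) / 2 * r k
  have hμt : ∀ k, μ k - t k ≤ √(2 * Real.log (n₁ k)) - (1 - θ) / 2 * r k := fun k => by
    show μ k - (1 + θ) / 2 * r k ≤ _
    linarith [hμ k, sqrt_two_mul_mul_le (c := 1 - ε) (Real.log_natCast_nonneg (n₀ k))]
  have hnoise_exp : Tendsto (fun k => Real.log (n₀ k) - (max (t k - 0) 0 + 1) ^ 2 / 2)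
      atTop atTop := by
    refine ((tendsto_sq_sub_sq_mul_add_one (tendsto_sqrt_two_mul_log hn₀)
      (a := (1 + θ) / 2) (abs_lt.2 ⟨by linarith, by linarith⟩)).atTop_div_const two_pos).congr
      fun k => ?_
    rw [sub_zero, max_eq_left (by positivity), Real.sq_sqrt (by positivity)]
    ring
  have hsignal_exp : Tendsto (fun k => Real.log (n₁ k) - (max (μ k - t k) 0 + 1) ^ 2 / 2)
      atTop atTop := by
    refine ((tendsto_sq_sub_sq_max_add_one (tendsto_sqrt_two_mul_log hn₁)
      ((tendsto_sqrt_two_mul_log hn₀).const_mul_atTop (by linarith)) hμt).atTop_div_const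
      two_pos).congr fun k => ?_
    rw [Real.sq_sqrt (by positivity)]
    ring
  have hbound := (tendsto_one_sub_ofReal_gaussianPDFReal_pow hnoise_exp).add
    (tendsto_one_sub_ofReal_gaussianPDFReal_pow hsignal_exp)
  rw [add_zero] at hbound
  refine tendsto_of_tendsto_of_tendsto_of_le_of_le tendsto_const_nhds hbound (fun _ => zero_le)
    fun k => ?_
  calc _ ≤ gaussianReal 0 1 (Iio (t k)) ^ n₀ k + gaussianReal (μ k) 1 (Ioi (t k)) ^ n₁ k := by
        simpa using measure_iSup_lt_iInf_le (hindep k) (hmeas k) (hnoise k) (hsignal k) (t k)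
    _ ≤ _ := by
      gcongr
      · exact gaussianReal_Iio_le one_ne_zero
      · exact gaussianReal_Ioi_le one_ne_zero

/-- Two-group normal model: if `μ ≤ sqrt (2(1-ε) log |S₀|) + sqrt (2 log |S₁|)` for some
fixed `ε > 0`, then `P(min_{i ∈ S₁} X_i > max_{i ∈ S₀} X_i) → 0` as `|S₀|, |S₁| → ∞`,
i.e. with probability tending to one at least one signal observation is mixed into the
range of the noise (the indistinguishable subset exists). -/
theorem indistinguishable_subset_exists
    {Ω : ℕ → Type*} [∀ k, MeasurableSpace (Ω k)]
    (P : ∀ k, Measure (Ω k)) [∀ k, IsProbabilityMeasure (P k)]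
    (n₀ n₁ : ℕ → ℕ) (hn₀ : Tendsto n₀ atTop atTop) (hn₁ : Tendsto n₁ atTop atTop)
    (μ : ℕ → ℝ) (ε : ℝ) (hε : 0 < ε)
    (X : ∀ k, (Fin (n₀ k) ⊕ Fin (n₁ k)) → Ω k → ℝ)
    (hmeas : ∀ k i, Measurable (X k i))
    (hindep : ∀ k, iIndepFun (X k) (P k))
    (hnoise : ∀ k i, Measure.map (X k (Sum.inl i)) (P k) = gaussianReal 0 1)
    (hsignal : ∀ k j, Measure.map (X k (Sum.inr j)) (P k) = gaussianReal (μ k) 1)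
    (hμ : ∀ k, μ k ≤ Real.sqrt (2 * (1 - ε) * Real.log (n₀ k))
        + Real.sqrt (2 * Real.log (n₁ k))) :
    Tendsto
      (fun k => P k {ω | (⨆ i, X k (Sum.inl i) ω) < ⨅ j, X k (Sum.inr j) ω})
      atTop (nhds 0) :=
  indistinguishable_subset_exists_general P n₀ n₁ hn₀ hn₁ μ ε hε X hmeas hindep hnoise hsignal hμ
end

section
/- Suppose the estimator π̂ satisfies P((1-ε)π ≤ π̂ ≤ π) → 1 for every ε > 0, and the noise p-values (|S_0| = (1-π)n of them) are i.i.d. Uniform[0,1]. Define d̂_* = max{i : p_{(i)} < αₙ/((1-π̂)n)} with αₙ → 0. Then P(n_0(d̂_*) > 0) → 0; i.e., with probability tending to 1 all p-values ranked before d̂_* come from signals. -/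
open MeasureTheory ProbabilityTheory Filter Set
open scoped ENNReal

/-!
On the event `π̂ ≤ π` (whose probability tends to one) the adaptive threshold
`αₙ / ((1 - π̂) n)` is at most the oracle threshold `αₙ / ((1 - π) n)`, and `(1 - π) n` is the
number of noise p-values. A union bound over the noise p-values, each uniform, then bounds the
probability that one of them falls below the oracle threshold by `αₙ → 0`.
-/

section

variable {Ω : Type*} [MeasurableSpace Ω] {μ : Measure Ω}

lemma measure_lt_le_ofReal_of_map_eq_uniform {X : Ω → ℝ} (hX : Measurable X)
    (hunif : μ.map X = volume.restrict (Icc 0 1)) (t : ℝ) :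
    μ {ω | X ω < t} ≤ ENNReal.ofReal t := by
  change μ (X ⁻¹' Iio t) ≤ _
  rw [← Measure.map_apply hX measurableSet_Iio, hunif, Measure.restrict_apply measurableSet_Iio]
  calc volume (Iio t ∩ Icc 0 1) ≤ volume (Icc 0 t) :=
        measure_mono fun x hx => ⟨hx.2.1, hx.1.le⟩
    _ = ENNReal.ofReal t := by simp

/-- Bonferroni's bound. -/
lemma measure_exists_lt_div_card_le {ι : Type*} (s : Finset ι) {X : ι → Ω → ℝ}
    (hX : ∀ i ∈ s, Measurable (X i))
    (hunif : ∀ i ∈ s, μ.map (X i) = volume.restrict (Icc 0 1)) (α : ℝ) :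
    μ {ω | ∃ i ∈ s, X i ω < α / s.card} ≤ ENNReal.ofReal α := by
  rcases s.eq_empty_or_nonempty with rfl | hs
  · simp
  have hcard : (0 : ℝ) < s.card := by exact_mod_cast hs.card_pos
  calc μ {ω | ∃ i ∈ s, X i ω < α / s.card}
      = μ (⋃ i ∈ s, {ω | X i ω < α / s.card}) := by congr 1; ext; simp
    _ ≤ ∑ i ∈ s, μ {ω | X i ω < α / s.card} := measure_biUnion_finset_le _ _
    _ ≤ ∑ _i ∈ s, ENNReal.ofReal (α / s.card) := Finset.sum_le_sum fun i hi =>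
        measure_lt_le_ofReal_of_map_eq_uniform (hX i hi) (hunif i hi) _
    _ = ENNReal.ofReal α := by
      rw [Finset.sum_const, nsmul_eq_mul, ← ENNReal.ofReal_natCast,
        ← ENNReal.ofReal_mul hcard.le, mul_div_cancel₀ _ hcard.ne']

end

lemma tendsto_measure_compl_of_tendsto_measure_one {ι : Type*} {l : Filter ι}
    {Ω : ι → Type*} [∀ i, MeasurableSpace (Ω i)] {μ : ∀ i, Measure (Ω i)}
    [∀ i, IsProbabilityMeasure (μ i)] {s : ∀ i, Set (Ω i)} (hs : ∀ i, MeasurableSet (s i))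
    (h : Tendsto (fun i => μ i (s i)) l (nhds 1)) :
    Tendsto (fun i => μ i (s i)ᶜ) l (nhds 0) := by
  simp_rw [prob_compl_eq_one_sub (hs _)]
  simpa using ENNReal.Tendsto.sub tendsto_const_nhds h (Or.inl ENNReal.one_ne_top)

lemma card_compl_eq_one_sub_div_mul {n : ℕ} (s : Finset (Fin n)) :
    (sᶜ.card : ℝ) = (1 - s.card / n) * n := by
  rw [Finset.card_compl, Fintype.card_fin, Nat.cast_sub (card_finset_fin_le s)]
  rcases n.eq_zero_or_pos with rfl | hn
  · simp [Subsingleton.elim s ∅]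
  · field_simp

lemma div_one_sub_mul_le_div_card_compl {n : ℕ} {s : Finset (Fin n)} (hs : sᶜ.Nonempty)
    {α b : ℝ} (hα : 0 ≤ α) (hb : b ≤ s.card / n) :
    α / ((1 - b) * n) ≤ α / sᶜ.card := by
  have hcard : (0 : ℝ) < sᶜ.card := by exact_mod_cast hs.card_pos
  refine div_le_div_of_nonneg_left hα hcard ?_
  rw [card_compl_eq_one_sub_div_mul]
  gcongr

theorem first_level_threshold_no_false_positive_general
    {Ω : ℕ → Type*} [∀ n, MeasurableSpace (Ω n)]
    (μ : ∀ n, Measure (Ω n)) [∀ n, IsProbabilityMeasure (μ n)]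
    (S₁ : ∀ n : ℕ, Finset (Fin n))  -- signal indices
    (π : ℕ → ℝ) (hπdef : ∀ n, π n = ((S₁ n).card : ℝ) / n)
    (P : ∀ n : ℕ, Fin n → Ω n → ℝ)
    (hmeas : ∀ n i, Measurable (P n i))
    (hunif : ∀ n, ∀ i ∉ S₁ n,
      Measure.map (P n i) (μ n) = volume.restrict (Set.Icc (0 : ℝ) 1))
    (πhat : ∀ n : ℕ, Ω n → ℝ)
    (hπhatmeas : ∀ n, Measurable (πhat n))
    (hcons : ∀ ε > (0 : ℝ),
      Tendsto (fun n => μ n {ω | (1 - ε) * π n ≤ πhat n ω ∧ πhat n ω ≤ π n})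
        atTop (nhds 1))
    (α : ℕ → ℝ) (hαpos : ∀ n, 0 < α n) (hα0 : Tendsto α atTop (nhds 0)) :
    Tendsto
      (fun n => μ n {ω | ∃ i ∉ S₁ n, P n i ω < α n / ((1 - πhat n ω) * n)})
      atTop (nhds 0) := by
  set G : ∀ n, Set (Ω n) := fun n => {ω | (1 - 1) * π n ≤ πhat n ω ∧ πhat n ω ≤ π n}
  have hG : Tendsto (fun n => μ n (G n)ᶜ) atTop (nhds 0) :=
    tendsto_measure_compl_of_tendsto_measure_one
      (fun n => measurableSet_le measurable_const (hπhatmeas n) |>.inter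
        (measurableSet_le (hπhatmeas n) measurable_const)) (hcons 1 one_pos)
  have hcover : ∀ n, {ω | ∃ i ∉ S₁ n, P n i ω < α n / ((1 - πhat n ω) * n)} ⊆
      (G n)ᶜ ∪ {ω | ∃ i ∈ (S₁ n)ᶜ, P n i ω < α n / (S₁ n)ᶜ.card} := by
    rintro n ω ⟨i, hi, hlt⟩
    by_cases hω : ω ∈ G n
    · refine Or.inr ⟨i, Finset.mem_compl.2 hi, hlt.trans_le ?_⟩
      exact div_one_sub_mul_le_div_card_compl ⟨i, Finset.mem_compl.2 hi⟩ (hαpos n).le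
        (hπdef n ▸ hω.2)
    · exact Or.inl hω
  have hbound : ∀ n, μ n {ω | ∃ i ∉ S₁ n, P n i ω < α n / ((1 - πhat n ω) * n)} ≤
      μ n (G n)ᶜ + ENNReal.ofReal (α n) := fun n =>
    calc _ ≤ _ := measure_mono (hcover n)
      _ ≤ _ := measure_union_le _ _
      _ ≤ _ := add_le_add le_rfl <| measure_exists_lt_div_card_le _ (fun i _ => hmeas n i)
          (fun i hi => hunif n i (Finset.mem_compl.1 hi)) _
  have hlim : Tendsto (fun n => μ n (G n)ᶜ + ENNReal.ofReal (α n)) atTop (nhds 0) := by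
    simpa using hG.add (ENNReal.tendsto_ofReal hα0)
  exact tendsto_of_tendsto_of_tendsto_of_le_of_le tendsto_const_nhds hlim
    (fun _ => zero_le) hbound

/-- First-level threshold of the TLT procedure: if the proportion estimator `π̂` is
consistent in the sense `P((1-ε)π ≤ π̂ ≤ π) → 1` for every `ε > 0`, the noise p-values
are i.i.d. Uniform[0,1], and `αₙ → 0`, then with probability tending to one no noise
p-value falls below the adaptive threshold `αₙ / ((1-π̂)n)`, i.e. `P(n₀(d̂_*) > 0) → 0`. -/
theorem first_level_threshold_no_false_positive
    {Ω : ℕ → Type*} [∀ n, MeasurableSpace (Ω n)]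
    (μ : ∀ n, Measure (Ω n)) [∀ n, IsProbabilityMeasure (μ n)]
    (S₁ : ∀ n : ℕ, Finset (Fin n))  -- signal indices
    (π : ℕ → ℝ) (hπdef : ∀ n, π n = ((S₁ n).card : ℝ) / n)
    (P : ∀ n : ℕ, Fin n → Ω n → ℝ)
    (hmeas : ∀ n i, Measurable (P n i))
    (hindep : ∀ n, iIndepFun (P n) (μ n))
    (hunif : ∀ n, ∀ i ∉ S₁ n,
      Measure.map (P n i) (μ n) = volume.restrict (Set.Icc (0 : ℝ) 1))
    (πhat : ∀ n : ℕ, Ω n → ℝ)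
    (hπhatmeas : ∀ n, Measurable (πhat n))
    (hcons : ∀ ε > (0 : ℝ),
      Tendsto (fun n => μ n {ω | (1 - ε) * π n ≤ πhat n ω ∧ πhat n ω ≤ π n})
        atTop (nhds 1))
    (α : ℕ → ℝ) (hαpos : ∀ n, 0 < α n) (hα0 : Tendsto α atTop (nhds 0)) :
    Tendsto
      (fun n => μ n {ω | ∃ i ∉ S₁ n, P n i ω < α n / ((1 - πhat n ω) * n)})
      atTop (nhds 0) :=
  first_level_threshold_no_false_positive_general μ S₁ π hπdef P hmeas hunif πhat hπhatmeas hcons α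
    hαpos hα0
end
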